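/- Let 0 < α < 1, ν = ν_α = (1−α)/(2−α), μ > 0 and set r = 2μ/(2−α). Then ∫₀¹ θ₊(x)² dx = (1/(2−α)) (1/r²) [ (r J_ν(r))² + (r J_{ν+1}(r))² − 2ν r J_ν(r) J_{ν+1}(r) ]. -/

import Mathlib

open MeasureTheory intervalIntegral

noncomputable def besselJ (ν y : ℝ) : ℝ :=
  ∑' m : ℕ, ((-1) ^ m / (m.factorial * Real.Gamma (m + ν + 1))) *
    (y / 2) ^ (2 * (m : ℝ) + ν)

/-- The function `θ₊(x) = x^{(1-α)/2} J_{ν_α}((2/(2-α)) μ x^{(2-α)/2})`,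
where `ν_α = (1-α)/(2-α)`. -/
noncomputable def thetaP (α μ x : ℝ) : ℝ :=
  x ^ ((1 - α) / 2) * besselJ ((1 - α) / (2 - α)) (2 / (2 - α) * μ * x ^ ((2 - α) / 2))

/-!
Writing `J_ν(y) = y ^ ν g_ν(y²)` with `g_ν = besselSeries ν` an entire power series,
termwise differentiation gives the recurrences `J_ν' = (ν / y) J_ν - J_{ν+1}` and
`J_{ν+1}' = J_ν - ((ν + 1) / y) J_{ν+1}`. Hence Lommel's function
`H(y) = y² / 2 (J_ν² + J_{ν+1}²) - ν y J_ν J_{ν+1}` is a primitive of `y J_ν(y)²`, and the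
substitution `y = r x ^ p` with `p = (2 - α) / 2` gives `∫₀¹ θ₊² = H(r) / (p r²)`,
since `H(0) = 0`.
-/

open Filter Set

section PowerSeries

variable {c : ℕ → ℝ}

theorem summable_natCast_mul_mul_pow (hc : ∀ S, Summable fun m => c m * S ^ m) (u : ℝ) :
    Summable fun m : ℕ => (m : ℝ) * c m * u ^ m := by
  refine .of_norm_bounded (hc (2 * |u|)).norm fun m => ?_
  have hm : (m : ℝ) ≤ 2 ^ m := by exact_mod_cast Nat.lt_two_pow_self.le
  simp only [Real.norm_eq_abs, abs_mul, abs_pow, Nat.abs_cast, abs_two, abs_abs, mul_pow]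
  calc (m : ℝ) * |c m| * |u| ^ m ≤ 2 ^ m * |c m| * |u| ^ m := by gcongr
    _ = |c m| * (2 ^ m * |u| ^ m) := by ring

theorem hasDerivAt_tsum_mul_pow (hc : ∀ S, Summable fun m => c m * S ^ m) (u : ℝ) :
    HasDerivAt (fun z => ∑' m, c m * z ^ m) (∑' m, (m + 1) * c (m + 1) * u ^ m) u := by
  set R := |u| + 1
  have hR : 1 ≤ R := le_add_of_nonneg_left (abs_nonneg u)
  have hbound : ∀ m y, |y| ≤ R → ‖c m * (m * y ^ (m - 1))‖ ≤ |m * c m * R ^ m| := by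
    intro m y hy
    simp only [Real.norm_eq_abs, abs_mul, abs_pow, Nat.abs_cast,
      abs_of_nonneg (zero_le_one.trans hR)]
    have : |y| ^ (m - 1) ≤ R ^ m :=
      (pow_le_pow_left₀ (abs_nonneg y) hy _).trans (pow_le_pow_right₀ hR (Nat.sub_le m 1))
    calc |c m| * (m * |y| ^ (m - 1)) ≤ |c m| * (m * R ^ m) := by gcongr
      _ = m * |c m| * R ^ m := by ring
  have hsum := (summable_natCast_mul_mul_pow hc R).abs
  have hderiv := hasDerivAt_tsum_of_isPreconnected hsum Metric.isOpen_ball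
    (convex_ball 0 R).isPreconnected (fun m y _ => (hasDerivAt_pow m y).const_mul (c m))
    (fun m y hy => hbound m y (mem_ball_zero_iff.1 hy).le) (Metric.mem_ball_self (by linarith))
    (hc 0) (y := u) (mem_ball_zero_iff.2 (by simp [R]))
  rw [(Summable.of_norm_bounded hsum fun m => hbound m u (by simp [R])).tsum_eq_zero_add]
    at hderiv
  refine hderiv.congr_deriv ?_
  simp only [Nat.cast_zero, zero_mul, mul_zero, zero_add, Nat.add_sub_cancel, Nat.cast_succ]
  exact tsum_congr fun m => by ring

end PowerSeries

noncomputable def besselCoeff (ν : ℝ) (m : ℕ) : ℝ :=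
  (-1) ^ m / (m.factorial * Real.Gamma (m + ν + 1) * 2 ^ (2 * (m : ℝ) + ν))

section BesselCoeff

variable {ν : ℝ}

theorem succ_mul_besselCoeff_succ (m : ℕ) :
    (m + 1) * besselCoeff ν (m + 1) = -(1 / 2) * besselCoeff (ν + 1) m := by
  have hG : (↑(m + 1) + ν + 1 : ℝ) = m + (ν + 1) + 1 := by push_cast; ring
  have hP : (2 : ℝ) ^ (2 * (↑(m + 1) : ℝ) + ν) = 2 * 2 ^ (2 * (m : ℝ) + (ν + 1)) := by
    rw [show 2 * (↑(m + 1) : ℝ) + ν = 2 * m + (ν + 1) + 1 by push_cast; ring,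
      Real.rpow_add_one two_ne_zero, mul_comm]
  rw [besselCoeff, besselCoeff, hG, hP, Nat.factorial_succ, pow_succ]
  push_cast
  field_simp

theorem besselCoeff_eq_mul_add_one (hν : -1 < ν) (m : ℕ) :
    besselCoeff ν m = 2 * (m + ν + 1) * besselCoeff (ν + 1) m := by
  have hpos : (0 : ℝ) < m + ν + 1 := by linarith [m.cast_nonneg (α := ℝ)]
  have hG : Real.Gamma (m + (ν + 1) + 1) = (m + ν + 1) * Real.Gamma (m + ν + 1) := by
    rw [← Real.Gamma_add_one hpos.ne']; ring_nf
  have hP : (2 : ℝ) ^ (2 * (m : ℝ) + (ν + 1)) = 2 * 2 ^ (2 * (m : ℝ) + ν) := by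
    rw [← add_assoc, Real.rpow_add_one two_ne_zero, mul_comm]
  rw [besselCoeff, besselCoeff, hG, hP]
  field_simp

theorem besselCoeff_succ (hν : -1 < ν) (m : ℕ) :
    besselCoeff ν (m + 1) = -besselCoeff ν m / (4 * (m + 1) * (m + ν + 1)) := by
  have hpos : (0 : ℝ) < m + ν + 1 := by linarith [m.cast_nonneg (α := ℝ)]
  have h := succ_mul_besselCoeff_succ (ν := ν) m
  rw [besselCoeff_eq_mul_add_one hν m]
  field_simp
  linear_combination 4 * h

theorem summable_besselCoeff_mul_pow (hν : -1 < ν) (u : ℝ) :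
    Summable fun m => besselCoeff ν m * u ^ m := by
  obtain ⟨N, hN⟩ := exists_nat_ge (|u| + 1)
  refine summable_of_ratio_norm_eventually_le (r := 1 / 2) (by norm_num) ?_
  filter_upwards [eventually_ge_atTop N] with m hm
  have hNm : (N : ℝ) ≤ m := by exact_mod_cast hm
  have hpos : (0 : ℝ) < 4 * (m + 1) * (m + ν + 1) := by
    have : (0 : ℝ) < m + ν + 1 := by linarith [m.cast_nonneg (α := ℝ)]
    positivity
  have hratio : |u| / (4 * (m + 1) * (m + ν + 1)) ≤ 1 / 2 := by
    rw [div_le_iff₀ hpos]; nlinarith [abs_nonneg u]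
  rw [besselCoeff_succ hν, pow_succ]
  simp only [Real.norm_eq_abs, abs_mul, abs_div, abs_neg, abs_of_pos hpos]
  calc |besselCoeff ν m| / (4 * (m + 1) * (m + ν + 1)) * (|u ^ m| * |u|)
      = |u| / (4 * (m + 1) * (m + ν + 1)) * (|besselCoeff ν m| * |u ^ m|) := by ring
    _ ≤ 1 / 2 * (|besselCoeff ν m| * |u ^ m|) := by gcongr

end BesselCoeff

noncomputable def besselSeries (ν u : ℝ) : ℝ := ∑' m, besselCoeff ν m * u ^ m

section BesselSeries

variable {ν : ℝ}

theorem hasDerivAt_besselSeries (hν : -1 < ν) (u : ℝ) :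
    HasDerivAt (besselSeries ν) (-(1 / 2) * besselSeries (ν + 1) u) u := by
  refine (hasDerivAt_tsum_mul_pow (summable_besselCoeff_mul_pow hν) u).congr_deriv ?_
  rw [besselSeries, ← tsum_mul_left]
  exact tsum_congr fun m => by rw [succ_mul_besselCoeff_succ, mul_assoc]

theorem besselSeries_eq (hν : -1 < ν) (u : ℝ) :
    besselSeries ν u = 2 * (ν + 1) * besselSeries (ν + 1) u - u * besselSeries (ν + 2) u := by
  have hν' : -1 < ν + 1 := by linarith
  have hshift : ∑' m : ℕ, (m : ℝ) * besselCoeff (ν + 1) m * u ^ m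
      = -(u / 2) * besselSeries (ν + 2) u := by
    rw [(summable_natCast_mul_mul_pow (summable_besselCoeff_mul_pow hν') u).tsum_eq_zero_add,
      besselSeries, ← tsum_mul_left]
    simp only [Nat.cast_zero, zero_mul, zero_add]
    refine tsum_congr fun m => ?_
    rw [show ν + 2 = ν + 1 + 1 by ring, pow_succ]
    push_cast
    linear_combination u ^ m * u * succ_mul_besselCoeff_succ (ν := ν + 1) m
  calc besselSeries ν u
      = ∑' m : ℕ, (2 * (ν + 1) * (besselCoeff (ν + 1) m * u ^ m)
          + 2 * ((m : ℝ) * besselCoeff (ν + 1) m * u ^ m)) :=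
        tsum_congr fun m => by rw [besselCoeff_eq_mul_add_one hν]; ring
    _ = 2 * (ν + 1) * besselSeries (ν + 1) u - u * besselSeries (ν + 2) u := by
      rw [((summable_besselCoeff_mul_pow hν' u).mul_left _).tsum_add
        ((summable_natCast_mul_mul_pow (summable_besselCoeff_mul_pow hν') u).mul_left _),
        tsum_mul_left, tsum_mul_left, hshift, ← besselSeries]
      ring

end BesselSeries

section BesselJ

variable {ν y : ℝ}

theorem besselJ_eq_rpow_mul_besselSeries (hy : 0 < y) :
    besselJ ν y = y ^ ν * besselSeries ν (y ^ 2) := by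
  rw [besselJ, besselSeries, ← tsum_mul_left]
  refine tsum_congr fun m => ?_
  rw [Real.div_rpow hy.le zero_le_two, Real.rpow_add hy, Real.rpow_mul_natCast hy.le,
    Real.rpow_two, besselCoeff]
  ring

theorem besselJ_zero (hν : 0 < ν) : besselJ ν 0 = 0 := by
  have h (m : ℕ) : (0 : ℝ) ^ (2 * (m : ℝ) + ν) = 0 := Real.zero_rpow (by positivity)
  simp [besselJ, h]

theorem continuousOn_besselJ (hν : 0 < ν) : ContinuousOn (besselJ ν) (Ici 0) := by
  have hseries : Continuous (besselSeries ν) := continuous_iff_continuousAt.2 fun u =>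
    (hasDerivAt_besselSeries (by linarith) u).continuousAt
  refine ((Real.continuous_rpow_const hν.le).mul
    (hseries.comp (continuous_pow 2))).continuousOn.congr fun z hz => ?_
  rcases (mem_Ici.1 hz).eq_or_lt with rfl | hz
  · simp [besselJ_zero hν, Real.zero_rpow hν.ne']
  · exact besselJ_eq_rpow_mul_besselSeries hz

theorem hasDerivAt_besselJ_series (hν : -1 < ν) (hy : 0 < y) :
    HasDerivAt (besselJ ν)
      (y ^ (ν - 1) * (ν * besselSeries ν (y ^ 2) - y ^ 2 * besselSeries (ν + 1) (y ^ 2)))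
      y := by
  have heq : (fun z => z ^ ν * besselSeries ν (z ^ 2)) =ᶠ[nhds y] besselJ ν := by
    filter_upwards [Ioi_mem_nhds hy] with z hz
    exact (besselJ_eq_rpow_mul_besselSeries hz).symm
  refine (((Real.hasDerivAt_rpow_const (Or.inl hy.ne')).mul
    ((hasDerivAt_besselSeries hν (y ^ 2)).comp y (hasDerivAt_pow 2 y))).congr_of_eventuallyEq
      heq.symm).congr_deriv ?_
  rw [Function.comp_apply, Real.rpow_sub_one hy.ne']
  field_simp
  ring

theorem hasDerivAt_besselJ (hν : -1 < ν) (hy : 0 < y) :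
    HasDerivAt (besselJ ν) (ν / y * besselJ ν y - besselJ (ν + 1) y) y := by
  refine (hasDerivAt_besselJ_series hν hy).congr_deriv ?_
  rw [besselJ_eq_rpow_mul_besselSeries hy, besselJ_eq_rpow_mul_besselSeries hy,
    Real.rpow_add_one hy.ne', Real.rpow_sub_one hy.ne']
  field_simp

theorem hasDerivAt_besselJ_add_one (hν : -1 < ν) (hy : 0 < y) :
    HasDerivAt (besselJ (ν + 1)) (besselJ ν y - (ν + 1) / y * besselJ (ν + 1) y) y := by
  refine (hasDerivAt_besselJ_series (by linarith) hy).congr_deriv ?_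
  rw [besselJ_eq_rpow_mul_besselSeries hy, besselJ_eq_rpow_mul_besselSeries hy,
    besselSeries_eq hν, Real.rpow_add_one hy.ne', add_sub_cancel_right,
    show ν + 1 + 1 = ν + 2 by ring]
  field_simp
  ring

end BesselJ

noncomputable def lommelPrimitive (ν y : ℝ) : ℝ :=
  y ^ 2 / 2 * (besselJ ν y ^ 2 + besselJ (ν + 1) y ^ 2)
    - ν * y * besselJ ν y * besselJ (ν + 1) y

section Lommel

variable {ν : ℝ}

theorem hasDerivAt_lommelPrimitive (hν : -1 < ν) {y : ℝ} (hy : 0 < y) :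
    HasDerivAt (lommelPrimitive ν) (y * besselJ ν y ^ 2) y := by
  have hJ := hasDerivAt_besselJ hν hy
  have hJ₁ := hasDerivAt_besselJ_add_one hν hy
  show HasDerivAt (fun z => z ^ 2 / 2 * (besselJ ν z ^ 2 + besselJ (ν + 1) z ^ 2)
    - ν * z * besselJ ν z * besselJ (ν + 1) z) _ y
  refine ((((hasDerivAt_pow 2 y).div_const 2).mul ((hJ.pow 2).add (hJ₁.pow 2))).sub
    ((((hasDerivAt_id' y).const_mul ν).mul hJ).mul hJ₁)).congr_deriv ?_
  simp only [Pi.mul_apply, Pi.add_apply, Pi.pow_apply]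
  field_simp
  ring

theorem continuousOn_lommelPrimitive (hν : 0 < ν) :
    ContinuousOn (lommelPrimitive ν) (Ici 0) := by
  have hJ := continuousOn_besselJ hν
  have hJ₁ := continuousOn_besselJ (by linarith : 0 < ν + 1)
  exact (((continuousOn_pow 2).div_const 2).mul ((hJ.pow 2).add (hJ₁.pow 2))).sub
    (((continuousOn_const.mul continuousOn_id).mul hJ).mul hJ₁)

theorem integral_rpow_mul_besselJ_sq (hν : 0 < ν) {r p b : ℝ} (hr : 0 < r) (hp : 0 < p)
    (hb : 0 ≤ b) :
    ∫ x in (0 : ℝ)..b, x ^ (2 * p - 1) * besselJ ν (r * x ^ p) ^ 2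
      = lommelPrimitive ν (r * b ^ p) / (p * r ^ 2) := by
  set G := fun x : ℝ => lommelPrimitive ν (r * x ^ p) / (p * r ^ 2)
  have hcont : ContinuousOn G (Icc 0 b) :=
    ((continuousOn_lommelPrimitive hν).comp
      (continuous_const.mul (Real.continuous_rpow_const hp.le)).continuousOn
      fun x hx => mem_Ici.2 (mul_nonneg hr.le (Real.rpow_nonneg hx.1 p))).div_const _
  have hderiv : ∀ x ∈ Ioo 0 b,
      HasDerivAt G (x ^ (2 * p - 1) * besselJ ν (r * x ^ p) ^ 2) x := by
    intro x hx
    have hx0 : 0 < x := hx.1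
    have hν' : -1 < ν := by linarith
    have hrx : 0 < r * x ^ p := mul_pos hr (Real.rpow_pos_of_pos hx0 p)
    refine (((hasDerivAt_lommelPrimitive hν' hrx).comp x
      ((Real.hasDerivAt_rpow_const (Or.inl hx0.ne')).const_mul r)).div_const _).congr_deriv ?_
    rw [show 2 * p - 1 = p + (p - 1) by ring, Real.rpow_add hx0]
    field_simp
  have hnonneg : ∀ x ∈ Ioo 0 b, 0 ≤ x ^ (2 * p - 1) * besselJ ν (r * x ^ p) ^ 2 :=
    fun x hx => mul_nonneg (Real.rpow_nonneg hx.1.le _) (sq_nonneg _)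
  rw [integral_eq_sub_of_hasDerivAt_of_le hb hcont hderiv
    ((intervalIntegrable_iff_integrableOn_Ioc_of_le hb).2
      (integrableOn_deriv_of_nonneg hcont hderiv hnonneg))]
  simp [G, lommelPrimitive, Real.zero_rpow hp.ne']

end Lommel

theorem stmt9_general (α μ : ℝ) (hα1 : α < 1) (hμ : 0 < μ) :
    ∫ x in (0:ℝ)..1, (thetaP α μ x) ^ 2
      = (1 / (2 - α)) * (1 / (2 * μ / (2 - α)) ^ 2) *
        (((2 * μ / (2 - α)) * besselJ ((1 - α) / (2 - α)) (2 * μ / (2 - α))) ^ 2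
          + ((2 * μ / (2 - α)) * besselJ ((1 - α) / (2 - α) + 1) (2 * μ / (2 - α))) ^ 2
          - 2 * ((1 - α) / (2 - α)) * (2 * μ / (2 - α))
              * besselJ ((1 - α) / (2 - α)) (2 * μ / (2 - α))
              * besselJ ((1 - α) / (2 - α) + 1) (2 * μ / (2 - α))) := by
  have hq : 0 < 2 - α := by linarith
  have hθ : ∀ x ∈ uIcc (0 : ℝ) 1, thetaP α μ x ^ 2 = x ^ (2 * ((2 - α) / 2) - 1) *
      besselJ ((1 - α) / (2 - α)) (2 * μ / (2 - α) * x ^ ((2 - α) / 2)) ^ 2 := by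
    intro x hx
    rw [uIcc_of_le zero_le_one] at hx
    rw [thetaP, mul_pow, ← Real.rpow_natCast, ← Real.rpow_mul hx.1,
      show (1 - α) / 2 * ((2 : ℕ) : ℝ) = 2 * ((2 - α) / 2) - 1 by push_cast; ring,
      show 2 / (2 - α) * μ = 2 * μ / (2 - α) by ring]
  rw [intervalIntegral.integral_congr hθ, integral_rpow_mul_besselJ_sq (div_pos (by linarith) hq)
    (div_pos (by linarith) hq) (half_pos hq) zero_le_one,
    lommelPrimitive, Real.one_rpow, mul_one]
  field_simp

/-- The `L²(0,1)` norm of `θ₊`: with `ν = (1-α)/(2-α)` and `r = 2μ/(2-α)`,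
`∫₀¹ θ₊(x)² dx = (1/(2-α)) (1/r²) [(r J_ν(r))² + (r J_{ν+1}(r))² - 2ν r J_ν(r) J_{ν+1}(r)]`. -/
theorem stmt9 (α μ : ℝ) (hα0 : 0 < α) (hα1 : α < 1) (hμ : 0 < μ) :
    ∫ x in (0:ℝ)..1, (thetaP α μ x) ^ 2
      = (1 / (2 - α)) * (1 / (2 * μ / (2 - α)) ^ 2) *
        (((2 * μ / (2 - α)) * besselJ ((1 - α) / (2 - α)) (2 * μ / (2 - α))) ^ 2
          + ((2 * μ / (2 - α)) * besselJ ((1 - α) / (2 - α) + 1) (2 * μ / (2 - α))) ^ 2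
          - 2 * ((1 - α) / (2 - α)) * (2 * μ / (2 - α))
              * besselJ ((1 - α) / (2 - α)) (2 * μ / (2 - α))
              * besselJ ((1 - α) / (2 - α) + 1) (2 * μ / (2 - α))) :=
  stmt9_general α μ hα1 hμ
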